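/- arXiv:2409.13389 — 2 statements merged into one kernel-verified Lean document; each statement's English description precedes it below -/
import Mathlib

section
/- Fix x_f > 0 and γ ∈ ℝ. For σ > 0, the partial derivative ∂P/∂σ(x_f,σ,γ) vanishes if and only if γ = 1 + 1/(t²(exp(1/(2t²)) − 1)), where t = σ/x_f. -/
open Real Set

/-- Filter response of the γ-normalized first-order Gaussian derivative for a
rectangular feature of width `x_f` (closed form). -/
noncomputable def P (xf σ γ : ℝ) : ℝ :=
  (4 * σ ^ (γ - 1) / Real.sqrt (2 * Real.pi)) *
    (1 - Real.exp (-xf ^ 2 / (2 * σ ^ 2)))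

/-!
With `E = exp (-x_f² / (2σ²))`, the σ-derivative of `P` is
`(4/√(2π)) σ^(γ-2) ((γ-1)(1-E) - E x_f²/σ²)`. The prefactor is positive, and writing
`t = σ/x_f`, so that `E = exp (1/(2t²))⁻¹`, the bracket vanishes exactly at the stated `γ`.
-/

lemma hasDerivAt_exp_neg_sq_div_two_sq (a : ℝ) {σ : ℝ} (hσ : σ ≠ 0) :
    HasDerivAt (fun s => exp (-a ^ 2 / (2 * s ^ 2)))
      (exp (-a ^ 2 / (2 * σ ^ 2)) * (a ^ 2 / σ ^ 3)) σ := by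
  have h := ((hasDerivAt_const σ (-a ^ 2)).fun_div ((hasDerivAt_pow 2 σ).const_mul 2)
    (by positivity)).exp
  refine h.congr_deriv ?_
  field_simp
  ring

lemma hasDerivAt_P (xf γ : ℝ) {σ : ℝ} (hσ : σ ≠ 0) :
    HasDerivAt (fun s => P xf s γ)
      (4 / √(2 * π) * σ ^ (γ - 2) *
        ((γ - 1) * (1 - exp (-xf ^ 2 / (2 * σ ^ 2))) -
          exp (-xf ^ 2 / (2 * σ ^ 2)) * (xf ^ 2 / σ ^ 2))) σ := by
  have h := ((Real.hasDerivAt_rpow_const (p := γ - 1) (Or.inl hσ)).fun_mul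
    ((hasDerivAt_const σ 1).fun_sub (hasDerivAt_exp_neg_sq_div_two_sq xf hσ))).const_mul
      (4 / √(2 * π))
  have hpow : σ ^ (γ - 1) = σ ^ (γ - 2) * σ := by
    rw [← Real.rpow_add_one hσ]; ring_nf
  have hP : (fun s => P xf s γ) =
      fun s => 4 / √(2 * π) * (s ^ (γ - 1) * (1 - exp (-xf ^ 2 / (2 * s ^ 2)))) := by
    funext s; rw [P]; ring
  rw [hP]
  refine h.congr_deriv ?_
  rw [show γ - 1 - 1 = γ - 2 by ring, hpow]
  field_simp
  ring

lemma sub_one_mul_one_sub_inv_sub_eq_zero_iff (γ : ℝ) {c t : ℝ} (hc₀ : c ≠ 0) (hc₁ : c ≠ 1)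
    (ht : t ≠ 0) :
    (γ - 1) * (1 - c⁻¹) - c⁻¹ / t ^ 2 = 0 ↔ γ = 1 + 1 / (t ^ 2 * (c - 1)) := by
  have hc₁' : c - 1 ≠ 0 := sub_ne_zero.2 hc₁
  field_simp
  constructor <;> intro h <;> linarith

theorem deriv_P_eq_zero_iff (xf γ : ℝ) (hxf : 0 < xf) (σ : ℝ) (hσ : 0 < σ) :
    deriv (fun s => P xf s γ) σ = 0 ↔
      γ = 1 + 1 / ((σ / xf) ^ 2 * (Real.exp (1 / (2 * (σ / xf) ^ 2)) - 1)) := by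
  set t := σ / xf with ht
  have hc : 1 < exp (1 / (2 * t ^ 2)) := one_lt_exp_iff.2 (by positivity)
  have hprefactor : 4 / √(2 * π) * σ ^ (γ - 2) ≠ 0 := by positivity
  have hbracket : (γ - 1) * (1 - exp (-xf ^ 2 / (2 * σ ^ 2))) -
      exp (-xf ^ 2 / (2 * σ ^ 2)) * (xf ^ 2 / σ ^ 2) =
      (γ - 1) * (1 - (exp (1 / (2 * t ^ 2)))⁻¹) - (exp (1 / (2 * t ^ 2)))⁻¹ / t ^ 2 := by
    rw [← exp_neg, ht]
    field_simp
  rw [(hasDerivAt_P xf γ hσ.ne').deriv, mul_eq_zero, or_iff_right hprefactor, hbracket]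
  exact sub_one_mul_one_sub_inv_sub_eq_zero_iff γ (exp_pos _).ne' hc.ne' (by positivity)
end

section
/- For every t > 0 and γ ∈ ℝ, the equation γ = 1 + 1/(t²(exp(1/(2t²)) − 1)) holds if and only if y·e^y = ((1−γ)/2)·exp((1−γ)/2), where y = (1−γ)/2 − 1/(2t²). (This is the algebraic reduction that identifies t with the W_{−1} branch of the Lambert W function.) -/
open Real

/- Put `u = 1/(2t²)` and `a = (1 - γ)/2`. Dividing by `eᵃ > 0`, the Lambert form
`(a - u) e^(a - u) = a eᵃ` becomes `a (eᵘ - 1) = -u`, and since `eᵘ ≠ 1` for `u > 0` this is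
`γ = 1 + 2u/(eᵘ - 1) = 1 + 1/(t²(eᵘ - 1))`. -/

theorem mul_exp_sub_eq_mul_exp_iff (a u : ℝ) :
    (a - u) * exp (a - u) = a * exp a ↔ a * (exp u - 1) = -u := by
  rw [exp_sub, mul_div_assoc', div_eq_iff (exp_pos u).ne', mul_comm a, mul_assoc,
    mul_comm (a - u), mul_left_cancel_iff_of_pos (exp_pos a)]
  constructor <;> intro h <;> linear_combination -h

theorem eq_one_add_one_div_mul_iff {γ s c : ℝ} (hs : s ≠ 0) (hc : c ≠ 0) :
    γ = 1 + 1 / (s * c) ↔ (1 - γ) / 2 * c = -(1 / (2 * s)) := by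
  constructor <;> intro h
  · subst h
    field_simp
    ring
  · field_simp at h ⊢
    linear_combination -h

theorem gamma_eq_iff_lambert_form (t γ : ℝ) (ht : 0 < t) :
    γ = 1 + 1 / (t ^ 2 * (Real.exp (1 / (2 * t ^ 2)) - 1)) ↔
      ((1 - γ) / 2 - 1 / (2 * t ^ 2)) *
          Real.exp ((1 - γ) / 2 - 1 / (2 * t ^ 2)) =
        ((1 - γ) / 2) * Real.exp ((1 - γ) / 2) := by
  have hu : 0 < 1 / (2 * t ^ 2) := by positivity
  have hc : exp (1 / (2 * t ^ 2)) - 1 ≠ 0 := (sub_pos.2 (one_lt_exp_iff.2 hu)).ne'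
  rw [eq_one_add_one_div_mul_iff (pow_pos ht 2).ne' hc, mul_exp_sub_eq_mul_exp_iff]
end
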